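/- For an (n−1)-times differentiable function f and any natural number k ≤ n−1, the k-th derivative of x ↦ f(x²) is given by (d/dx)^k [f(x²)] = k! · Σ_{j=0}^{⌊k/2⌋} (2x)^{k−2j} / (j! (k−2j)!) · f^{(k−j)}(x²). -/

import Mathlib

/-!
Differentiating `(2x)^(k-2j) · f^(k-j)(x²)` gives `(2x)^(k+1-2j) · f^(k+1-j)(x²)` plus `2(k-2j)`
times the next term `(2x)^(k-1-2j) · f^(k-j)(x²)`. So by induction on `k` the `k`-th derivative
is `∑ⱼ c(k,j) (2x)^(k-2j) f^(k-j)(x²)` for coefficients vanishing at `2j > k` with `c(k,0) = 1` and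
`c(k+1,j+1) = c(k,j+1) + 2(k-2j) c(k,j)`, and `k!/(j!(k-2j)!)` satisfies this recurrence
because `k + 1 = (k-2j-1) + 2(j+1)`.
-/

open Finset

/-- Extended by zero to `k < 2 * j`, so that all sums can run over `range (k + 1)`. -/
noncomputable def sqCoeff (k j : ℕ) : ℝ :=
  if 2 * j ≤ k then (k.factorial : ℝ) / (j.factorial * (k - 2 * j).factorial) else 0

theorem sqCoeff_zero (k : ℕ) : sqCoeff k 0 = 1 := by
  simp [sqCoeff, Nat.factorial_ne_zero]

theorem sqCoeff_of_lt {k j : ℕ} (h : k < 2 * j) : sqCoeff k j = 0 := by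
  simp [sqCoeff, h]

theorem sqCoeff_of_eq_add {k j a : ℕ} (h : k = a + 2 * j) :
    sqCoeff k j = k.factorial / (j.factorial * a.factorial) := by
  rw [sqCoeff, if_pos (by omega), show k - 2 * j = a by omega]

theorem sqCoeff_succ_succ (k j : ℕ) :
    sqCoeff (k + 1) (j + 1) = sqCoeff k (j + 1) + 2 * (k - 2 * j : ℕ) * sqCoeff k j := by
  rcases lt_or_ge k (2 * j + 1) with hk | hk
  · have hkj : (k - 2 * j : ℕ) * sqCoeff k j = 0 := by
      rcases (by omega : k = 2 * j ∨ k < 2 * j) with rfl | hlt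
      · simp
      · simp [sqCoeff_of_lt hlt]
    rw [sqCoeff_of_lt (by omega), sqCoeff_of_lt (by omega), mul_assoc, hkj]
    simp
  obtain ⟨a, rfl⟩ : ∃ a, k = a + 1 + 2 * j := ⟨k - (2 * j + 1), by omega⟩
  rw [sqCoeff_of_eq_add (a := a) (by omega), sqCoeff_of_eq_add (a := a + 1) rfl,
    show a + 1 + 2 * j - 2 * j = a + 1 by omega, Nat.factorial_succ (a + 1 + 2 * j)]
  rcases a with _ | b
  · rw [sqCoeff_of_lt (by omega), Nat.factorial_succ j]
    push_cast
    field_simp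
    ring
  · rw [sqCoeff_of_eq_add (a := b) (by omega), Nat.factorial_succ j, Nat.factorial_succ (b + 1),
      Nat.factorial_succ b]
    push_cast
    field_simp
    ring

theorem sum_sqCoeff_succ (k : ℕ) (T : ℕ → ℝ) :
    ∑ j ∈ range (k + 2), sqCoeff (k + 1) j * T j =
      ∑ j ∈ range (k + 1), sqCoeff k j * (T j + 2 * (k - 2 * j : ℕ) * T (j + 1)) := by
  have hshift : ∑ j ∈ range (k + 1), sqCoeff k (j + 1) * T (j + 1) + sqCoeff k 0 * T 0 =
      ∑ j ∈ range (k + 1), sqCoeff k j * T j := by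
    rw [← sum_range_succ' (fun j => sqCoeff k j * T j), sum_range_succ, sqCoeff_of_lt (by omega),
      zero_mul, add_zero]
  rw [sum_range_succ']
  simp only [sqCoeff_succ_succ, sqCoeff_zero, add_mul, mul_add, sum_add_distrib, ← hshift]
  have hcomm : ∑ j ∈ range (k + 1), sqCoeff k j * (2 * (k - 2 * j : ℕ) * T (j + 1)) =
      ∑ j ∈ range (k + 1), 2 * (k - 2 * j : ℕ) * sqCoeff k j * T (j + 1) :=
    sum_congr rfl fun _ _ => by ring
  rw [hcomm]
  ring

theorem HasDerivAt.two_mul_pow_mul_comp_sq {g : ℝ → ℝ} {d x : ℝ} (a : ℕ)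
    (hg : HasDerivAt g d (x ^ 2)) :
    HasDerivAt (fun y => (2 * y) ^ a * g (y ^ 2))
      ((2 * x) ^ (a + 1) * d + 2 * a * (2 * x) ^ (a - 1) * g (x ^ 2)) x := by
  have hpow : HasDerivAt (fun y => (2 * y) ^ a) (a * (2 * x) ^ (a - 1) * 2) x := by
    simpa [Function.comp_def] using
      (hasDerivAt_pow a (2 * x)).comp x ((hasDerivAt_id x).const_mul 2)
  have hcomp : HasDerivAt (fun y => g (y ^ 2)) (d * (2 * x)) x := by
    simpa [Function.comp_def] using
      HasDerivAt.comp (h := fun y => y ^ 2) x hg (hasDerivAt_pow 2 x)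
  exact (hpow.fun_mul hcomp).congr_deriv (by ring)

noncomputable def sqTerm (f : ℝ → ℝ) (k j : ℕ) (x : ℝ) : ℝ :=
  (2 * x) ^ (k - 2 * j) * iteratedDeriv (k - j) f (x ^ 2)

theorem hasDerivAt_sqTerm {f : ℝ → ℝ} {k j : ℕ} (hj : 2 * j ≤ k)
    (hf : Differentiable ℝ (iteratedDeriv (k - j) f)) (x : ℝ) :
    HasDerivAt (sqTerm f k j)
      (sqTerm f (k + 1) j x + 2 * (k - 2 * j : ℕ) * sqTerm f (k + 1) (j + 1) x) x := by
  have h := (hf (x ^ 2)).hasDerivAt.two_mul_pow_mul_comp_sq (k - 2 * j)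
  rw [← iteratedDeriv_succ] at h
  unfold sqTerm
  rw [show k + 1 - 2 * j = k - 2 * j + 1 by omega, show k + 1 - j = k - j + 1 by omega,
    show k + 1 - 2 * (j + 1) = k - 2 * j - 1 by omega, show k + 1 - (j + 1) = k - j by omega]
  convert h using 1
  ring

theorem iteratedDeriv_comp_sq_eq_sum {N : ℕ} {f : ℝ → ℝ} (hf : ContDiff ℝ (N : ℕ∞) f)
    {k : ℕ} (hk : k ≤ N) :
    iteratedDeriv k (fun y => f (y ^ 2)) = fun x => ∑ j ∈ range (k + 1), sqCoeff k j * sqTerm f k j x := by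
  induction k with
  | zero => ext x; simp [sqTerm, sqCoeff_zero]
  | succ k ih =>
    ext x
    have hderiv : HasDerivAt (fun y => ∑ j ∈ range (k + 1), sqCoeff k j * sqTerm f k j y)
        (∑ j ∈ range (k + 1), sqCoeff k j *
          (sqTerm f (k + 1) j x + 2 * (k - 2 * j : ℕ) * sqTerm f (k + 1) (j + 1) x)) x := by
      refine HasDerivAt.fun_sum fun j _ => ?_
      by_cases hj : 2 * j ≤ k
      · have hdiff : Differentiable ℝ (iteratedDeriv (k - j) f) :=
          hf.differentiable_iteratedDeriv _ (by exact_mod_cast Nat.cast_lt.mpr (by omega))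
        exact (hasDerivAt_sqTerm hj hdiff x).const_mul _
      · simpa [sqCoeff_of_lt (not_le.mp hj)] using hasDerivAt_const x (0 : ℝ)
    rw [iteratedDeriv_succ, ih (by omega), hderiv.deriv, sum_sqCoeff_succ]

theorem iteratedDeriv_comp_sq (n : ℕ) (f : ℝ → ℝ)
    (hf : ContDiff ℝ ((n - 1 : ℕ) : ℕ∞) f) (k : ℕ) (hk : k ≤ n - 1) (x : ℝ) :
    iteratedDeriv k (fun y => f (y ^ 2)) x =
      (k.factorial : ℝ) * ∑ j ∈ Finset.range (k / 2 + 1),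
        (2 * x) ^ (k - 2 * j) / ((j.factorial : ℝ) * ((k - 2 * j).factorial : ℝ)) *
          iteratedDeriv (k - j) f (x ^ 2) := by
  rw [congrFun (iteratedDeriv_comp_sq_eq_sum hf hk) x, mul_sum,
    ← sum_subset (range_subset_range.mpr (by omega : k / 2 + 1 ≤ k + 1))]
  · refine sum_congr rfl fun j hj => ?_
    rw [sqCoeff, if_pos (by rw [mem_range] at hj; omega), sqTerm]
    ring
  · intro j _ hj
    rw [mem_range, not_lt] at hj
    rw [sqCoeff_of_lt (by omega), zero_mul]
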